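/- Let $\Sigma$ be an $n \times n$ real matrix with strictly positive diagonal entries, let $\sigma \in \mathbb{R}^n$ with $\sigma_i = \sqrt{\Sigma_{ii}}$, let $\mu, \zeta \in \mathbb{R}^n$ be arbitrary vectors, and define $R = \mathrm{diag}(\sigma)^{-1} \Sigma\, \mathrm{diag}(\sigma)^{-1}$. Let $D$ be the $n \times 2n$ matrix $D = \mathrm{diag}(1/\sigma^2)\,\big[\mathrm{diag}(\sigma + \mu \odot \zeta) \;\big|\; \mathrm{diag}(-\zeta/2)\big]$ and let $\Omega$ be the $2n \times 2n$ block matrix $\Omega = \begin{pmatrix} \Sigma & 2\Sigma\,\mathrm{diag}(\mu) \\ 2\,\mathrm{diag}(\mu)\Sigma & 2\,\Sigma \odot \Sigma + 4\,\mathrm{diag}(\mu)\Sigma\,\mathrm{diag}(\mu) \end{pmatrix}$. Then $D\, \Omega\, D^\top = R + \tfrac{1}{2}\, \mathrm{diag}(\zeta)\,(R \odot R)\,\mathrm{diag}(\zeta)$. -/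

import Mathlib

/-!
Write `D = [diag p | diag q]` with `p = (σ + μ ⊙ ζ) / σ²` and `q = -ζ / (2σ²)`. Expanding
`D Ω Dᵀ` blockwise, the four terms carrying `Σ` combine into a single square
`diag (p + 2 μ ⊙ q) Σ diag (p + 2 μ ⊙ q)`, and `p + 2 μ ⊙ q = σ / σ² = 1 / σ`: the means drop out,
leaving `R`. The remaining term `2 diag q (Σ ⊙ Σ) diag q` is `½ diag ζ (R ⊙ R) diag ζ`.
-/

open Matrix

theorem fromCols_mul_fromBlocks_mul_transpose_fromCols {α m n₁ n₂ : Type*} [Semiring α]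
    [Fintype n₁] [Fintype n₂] (P : Matrix m n₁ α) (Q : Matrix m n₂ α) (A : Matrix n₁ n₁ α)
    (B : Matrix n₁ n₂ α) (C : Matrix n₂ n₁ α) (E : Matrix n₂ n₂ α) :
    fromCols P Q * fromBlocks A B C E * (fromCols P Q)ᵀ =
      P * A * Pᵀ + P * B * Qᵀ + Q * C * Pᵀ + Q * E * Qᵀ := by
  rw [fromCols_mul_fromBlocks, transpose_fromCols, fromCols_mul_fromRows]
  simp only [Matrix.add_mul]
  abel

theorem fromCols_diagonal_mul_momentCov_mul_transpose {α n : Type*} [CommRing α] [Fintype n]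
    [DecidableEq n] (p q μ : n → α) (S : Matrix n n α) :
    fromCols (diagonal p) (diagonal q) *
        fromBlocks S ((2 : α) • (S * diagonal μ)) ((2 : α) • (diagonal μ * S))
          ((2 : α) • hadamard S S + (4 : α) • (diagonal μ * S * diagonal μ)) *
        (fromCols (diagonal p) (diagonal q))ᵀ =
      diagonal (p + 2 * μ * q) * S * diagonal (p + 2 * μ * q) +
        (2 : α) • (diagonal q * hadamard S S * diagonal q) := by
  rw [fromCols_mul_fromBlocks_mul_transpose_fromCols]
  ext i j
  simp only [diagonal_transpose, Matrix.add_apply, Matrix.smul_mul, Matrix.mul_smul, Matrix.mul_add,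
    Matrix.add_mul, Matrix.smul_apply, diagonal_mul, mul_diagonal, hadamard_apply, smul_eq_mul,
    Pi.add_apply, Pi.mul_apply, Pi.ofNat_apply]
  ring

theorem stmt_7_general (n : ℕ) (S : Matrix (Fin n) (Fin n) ℝ)
    (σ : Fin n → ℝ)
    (μ ζ : Fin n → ℝ)
    (R : Matrix (Fin n) (Fin n) ℝ)
    (hR : R = Matrix.diagonal (fun i => (σ i)⁻¹) * S * Matrix.diagonal (fun i => (σ i)⁻¹))
    (D : Matrix (Fin n) (Fin n ⊕ Fin n) ℝ)
    (hD : D = Matrix.diagonal (fun i => 1 / (σ i) ^ 2) *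
      Matrix.fromCols (Matrix.diagonal (fun i => σ i + μ i * ζ i))
        (Matrix.diagonal (fun i => -(ζ i) / 2)))
    (Ω : Matrix (Fin n ⊕ Fin n) (Fin n ⊕ Fin n) ℝ)
    (hΩ : Ω = Matrix.fromBlocks S ((2 : ℝ) • (S * Matrix.diagonal μ))
      ((2 : ℝ) • (Matrix.diagonal μ * S))
      ((2 : ℝ) • (Matrix.hadamard S S) +
        (4 : ℝ) • (Matrix.diagonal μ * S * Matrix.diagonal μ))) :
    D * Ω * Dᵀ = R + (1 / 2 : ℝ) •
      (Matrix.diagonal ζ * Matrix.hadamard R R * Matrix.diagonal ζ) := by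
  subst hR hD hΩ
  rw [mul_fromCols, diagonal_mul_diagonal, diagonal_mul_diagonal,
    fromCols_diagonal_mul_momentCov_mul_transpose]
  have hmeans : ((fun i => 1 / σ i ^ 2 * (σ i + μ i * ζ i)) +
      2 * μ * fun i => 1 / σ i ^ 2 * (-ζ i / 2)) = fun i => (σ i)⁻¹ := by
    funext i
    calc 1 / σ i ^ 2 * (σ i + μ i * ζ i) + 2 * μ i * (1 / σ i ^ 2 * (-ζ i / 2))
        = σ i / (σ i * σ i) := by ring
      _ = (σ i)⁻¹ := div_self_mul_self' (σ i)
  rw [hmeans]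
  congr 1
  ext i j
  simp only [Matrix.smul_apply, diagonal_mul, mul_diagonal, hadamard_apply, smul_eq_mul]
  ring

/-- The delta-method covariance of the vector of Sharpe ratios: multiplying the
`n × 2n` derivative matrix `D` against the `2n × 2n` moment covariance `Ω` gives
`R + ½ diag(ζ) (R ⊙ R) diag(ζ)`, where `R` is the correlation matrix. -/
theorem stmt_7 (n : ℕ) (S : Matrix (Fin n) (Fin n) ℝ) (hdiag : ∀ i, 0 < S i i)
    (σ : Fin n → ℝ) (hσ : ∀ i, σ i = Real.sqrt (S i i))
    (μ ζ : Fin n → ℝ)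
    (R : Matrix (Fin n) (Fin n) ℝ)
    (hR : R = Matrix.diagonal (fun i => (σ i)⁻¹) * S * Matrix.diagonal (fun i => (σ i)⁻¹))
    (D : Matrix (Fin n) (Fin n ⊕ Fin n) ℝ)
    (hD : D = Matrix.diagonal (fun i => 1 / (σ i) ^ 2) *
      Matrix.fromCols (Matrix.diagonal (fun i => σ i + μ i * ζ i))
        (Matrix.diagonal (fun i => -(ζ i) / 2)))
    (Ω : Matrix (Fin n ⊕ Fin n) (Fin n ⊕ Fin n) ℝ)
    (hΩ : Ω = Matrix.fromBlocks S ((2 : ℝ) • (S * Matrix.diagonal μ))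
      ((2 : ℝ) • (Matrix.diagonal μ * S))
      ((2 : ℝ) • (Matrix.hadamard S S) +
        (4 : ℝ) • (Matrix.diagonal μ * S * Matrix.diagonal μ))) :
    D * Ω * Dᵀ = R + (1 / 2 : ℝ) •
      (Matrix.diagonal ζ * Matrix.hadamard R R * Matrix.diagonal ζ) :=
  stmt_7_general n S σ μ ζ R hR D hD Ω hΩ
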